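/- Let L be a selfadjoint operator in L²(X, m), bounded below, with E0 the infimum of the spectrum of L, and assume that the semigroup (e^{-tL})_{t≥0} has a kernel p satisfying (K1), (K2), (K3). Then for all x, y ∈ X, (log p_t(x, y))/t → −E0 as t → ∞. -/

import Mathlib

/-!
Upper bound: by Chapman–Kolmogorov, `p_{t+2}(x,y) = ⟪p_1(x,·), e^{-tL} p_1(y,·)⟫`, which is at
most `‖p_1(x,·)‖ ‖p_1(y,·)‖ e^{-t E0}` because `‖e^{-tL}‖ = e^{-t E0}`.

Lower bound: fix `E1 > E0`. Since `‖e^{-L}‖ > e^{-E1}`, some `g` has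
`⟪g, e^{-2L} g⟫ > e^{-2 E1} ‖g‖²`; as the kernel is positive, `|g|` does too. Truncating
`|g|` at a large multiple of `Ψ = min(p_2(x,·), p_2(y,·)) > 0` keeps this strict inequality, so the
truncation `f ≤ c Ψ` has spectral mass `M > 0` below `E1`. Then
`M e^{-t E1} ≤ ⟪f, e^{-tL} f⟫ ≤ c² ⟪p_2(x,·), e^{-tL} p_2(y,·)⟫ = c² p_{t+4}(x,y)`.
-/

open MeasureTheory Filter Topology
open scoped InnerProductSpace ENNReal

noncomputable section

/-- The infimum of the topological support of a Borel measure on `ℝ`, following the paper's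
definition: `supp μ = {E : ∀ δ > 0, μ(E - δ, E + δ) > 0}`. -/
def suppInf (μ : Measure ℝ) : ℝ :=
  sInf {E : ℝ | ∀ δ > 0, 0 < μ (Set.Ioo (E - δ) (E + δ))}

/-- `T` is the heat semigroup `(e^{-tL})_{t ≥ 0}` of a selfadjoint operator `L` in `H` that is
bounded below, where `ρ f` is the spectral measure of `f` with respect to `L` (the finite Borel
measure supported in `[E0, ∞)` with `⟪f, e^{-tL} f⟫ = ∫ e^{-ts} dρ_f(s)` for all `t ≥ 0`),
and `E0` is the infimum of the spectrum of `L` (equivalently, `‖e^{-tL}‖ = e^{-t·E0}`). -/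
structure IsHeatSemigroupOf {H : Type*} [NormedAddCommGroup H] [InnerProductSpace ℝ H]
    [CompleteSpace H] (T : ℝ → H →L[ℝ] H) (ρ : H → Measure ℝ) (E0 : ℝ) : Prop where
  symm : ∀ t : ℝ, 0 ≤ t → ∀ f g : H, ⟪T t f, g⟫_ℝ = ⟪f, T t g⟫_ℝ
  map_zero : T 0 = 1
  semigroup : ∀ s t : ℝ, 0 ≤ s → 0 ≤ t → T (s + t) = T s ∘L T t
  finite : ∀ f : H, ρ f Set.univ ≠ ⊤
  support_bddBelow : ∀ f : H, ρ f (Set.Iio E0) = 0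
  inner_eq : ∀ (f : H) (t : ℝ), 0 ≤ t → ⟪f, T t f⟫_ℝ = ∫ s, Real.exp (-(t * s)) ∂(ρ f)
  norm_eq : ∀ t : ℝ, 0 ≤ t → ‖T t‖ = Real.exp (-(t * E0))

/-- `p` is a kernel of the semigroup `T = (e^{-tL})_{t>0}` on `L²(X, m)` in the sense of the
paper: a measurable function `p : (0,∞) × X × X → (0,∞)` with
`e^{-tL} f(x) = ∫ p_t(x,y) f(y) dm(y)` for a.e. `x`, satisfying (K1) symmetry,
(K2) `p_t(x,·) ∈ L²(X,m)`, and (K3) the Chapman–Kolmogorov identity. (The values of the Lean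
function `p` at `t ≤ 0` are irrelevant.) -/
structure IsKernelOf {X : Type*} [MeasurableSpace X] (m : Measure X)
    (T : ℝ → Lp ℝ 2 m →L[ℝ] Lp ℝ 2 m) (p : ℝ → X → X → ℝ) : Prop where
  meas : Measurable fun q : ℝ × X × X => p q.1 q.2.1 q.2.2
  pos : ∀ t : ℝ, 0 < t → ∀ x y : X, 0 < p t x y
  symm : ∀ t : ℝ, 0 < t → ∀ x y : X, p t x y = p t y x
  memL2 : ∀ t : ℝ, 0 < t → ∀ x : X, MemLp (p t x) 2 m
  chapman : ∀ t s : ℝ, 0 < t → 0 < s → ∀ x y : X,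
      p (t + s) x y = ∫ z, p t x z * p s z y ∂m
  represents : ∀ t : ℝ, 0 < t → ∀ f : Lp ℝ 2 m,
      (T t f : X → ℝ) =ᵐ[m] fun x => ∫ y, p t x y * f y ∂m

open Real

instance MeasureTheory.Lp.instPosSMulMono {α E : Type*} [MeasurableSpace α] {μ : Measure α}
    {p : ℝ≥0∞} [NormedAddCommGroup E] [PartialOrder E] [NormedSpace ℝ E] [PosSMulMono ℝ E] :
    PosSMulMono ℝ (Lp E p μ) where
  smul_le_smul_of_nonneg_left c hc f g hfg := by
    rw [← Lp.coeFn_le] at hfg ⊢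
    filter_upwards [Lp.coeFn_smul c f, Lp.coeFn_smul c g, hfg] with z hf hg h
    rw [hf, hg]
    exact smul_le_smul_of_nonneg_left h hc

section PositivityPreserving

variable {E : Type*} [NormedAddCommGroup E] [InnerProductSpace ℝ E] {A : E →L[ℝ] E}

theorem inner_apply_mono [PartialOrder E] [IsOrderedAddMonoid E]
    (hA : ∀ a b : E, 0 ≤ a → 0 ≤ b → 0 ≤ ⟪a, A b⟫_ℝ) {a a' b b' : E}
    (ha' : 0 ≤ a') (hb : 0 ≤ b) (haa : a' ≤ a) (hbb : b' ≤ b) :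
    ⟪a', A b'⟫_ℝ ≤ ⟪a, A b⟫_ℝ := by
  have h₁ := hA (a - a') b (sub_nonneg.2 haa) hb
  have h₂ := hA a' (b - b') ha' (sub_nonneg.2 hbb)
  rw [inner_sub_left] at h₁
  rw [map_sub, inner_sub_right] at h₂
  linarith

theorem inner_apply_self_le_abs [Lattice E] [IsOrderedAddMonoid E]
    (hA : ∀ a b : E, 0 ≤ a → 0 ≤ b → 0 ≤ ⟪a, A b⟫_ℝ) (g : E) :
    ⟪g, A g⟫_ℝ ≤ ⟪|g|, A |g|⟫_ℝ := by
  have hsub : 0 ≤ |g| - g := sub_nonneg.2 (le_abs_self g)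
  have hadd : 0 ≤ |g| + g := neg_le_iff_add_nonneg.1 (neg_le_abs g)
  -- `2⟪|g|, A|g|⟫ - 2⟪g, Ag⟫ = ⟪|g| - g, A(|g| + g)⟫ + ⟪|g| + g, A(|g| - g)⟫`
  have h₁ := hA _ _ hsub hadd
  have h₂ := hA _ _ hadd hsub
  simp only [map_add, map_sub, inner_add_left, inner_sub_left, inner_add_right,
    inner_sub_right] at h₁ h₂
  linarith

end PositivityPreserving

namespace MeasureTheory.L2

variable {X : Type*} [MeasurableSpace X] {m : Measure X}

theorem real_inner_eq_integral (f g : Lp ℝ 2 m) : ⟪f, g⟫_ℝ = ∫ z, f z * g z ∂m := by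
  simp only [L2.inner_def, RCLike.inner_apply, conj_trivial, mul_comm]

theorem real_inner_nonneg {f g : Lp ℝ 2 m} (hf : 0 ≤ f) (hg : 0 ≤ g) : 0 ≤ ⟪f, g⟫_ℝ := by
  rw [← Lp.coeFn_nonneg] at hf hg
  rw [real_inner_eq_integral]
  exact integral_nonneg_of_ae (by filter_upwards [hf, hg] with z hfz hgz using mul_nonneg hfz hgz)

theorem tendsto_inf_smul_atTop (f g : Lp ℝ 2 m) (hg : ∀ᵐ z ∂m, 0 < g z) :
    Tendsto (fun c : ℝ => f ⊓ c • g) atTop (𝓝 f) := by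
  have hcoe : ∀ c : ℝ, ∀ᵐ z ∂m, (f ⊓ c • g - f) z = min (f z) (c * g z) - f z := fun c => by
    filter_upwards [Lp.coeFn_sub (f ⊓ c • g) f, Lp.coeFn_inf f (c • g), Lp.coeFn_smul c g]
      with z h₁ h₂ h₃
    rw [h₁, Pi.sub_apply, h₂, Pi.inf_apply, h₃, Pi.smul_apply, smul_eq_mul]
  have hsq : Tendsto (fun c : ℝ => ‖f ⊓ c • g - f‖ ^ 2) atTop (𝓝 0) := by
    have hint : ∀ c : ℝ, ‖f ⊓ c • g - f‖ ^ 2 = ∫ z, (min (f z) (c * g z) - f z) ^ 2 ∂m :=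
      fun c => by
        rw [← real_inner_self_eq_norm_sq, real_inner_eq_integral]
        exact integral_congr_ae ((hcoe c).mono fun z hz => by simp only [hz, sq])
    simp_rw [hint]
    rw [← integral_zero X ℝ]
    refine tendsto_integral_filter_of_dominated_convergence (fun z => f z ^ 2)
      (Eventually.of_forall fun c => ?_) ?_ (Lp.memLp f).integrable_sq ?_
    · exact (((Lp.aestronglyMeasurable f).inf
        ((Lp.aestronglyMeasurable g).const_mul c)).sub (Lp.aestronglyMeasurable f)).pow 2
    · filter_upwards [eventually_ge_atTop 0] with c hc
      filter_upwards [hg] with z hz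
      rw [Real.norm_eq_abs, abs_sq, sq_le_sq]
      rcases le_total (f z) (c * g z) with hle | hle
      · simp [min_eq_left hle]
      · rw [min_eq_right hle, abs_sub_comm, abs_of_nonneg (by linarith),
          abs_of_nonneg (hle.trans' (by positivity))]
        linarith [mul_nonneg hc hz.le]
    · filter_upwards [hg] with z hz
      refine tendsto_const_nhds.congr' ?_
      filter_upwards [eventually_ge_atTop (f z / g z)] with c hc
      rw [min_eq_left ((div_le_iff₀ hz).1 hc)]
      ring
  rw [tendsto_iff_norm_sub_tendsto_zero]
  simpa using hsq.sqrt

end MeasureTheory.L2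

theorem tendsto_log_div_of_exp_bounds {f : ℝ → ℝ} {a : ℝ}
    (hlower : ∀ b < a, ∃ K > 0, ∀ᶠ t in atTop, K * exp (b * t) ≤ f t)
    (hupper : ∃ C, ∀ᶠ t in atTop, f t ≤ C * exp (a * t)) :
    Tendsto (fun t => log (f t) / t) atTop (𝓝 a) := by
  have hlim (C b : ℝ) : Tendsto (fun t => (log C + b * t) / t) atTop (𝓝 b) := by
    refine ((tendsto_id.const_div_atTop (log C)).add_const b).congr' ?_ |>.trans (by simp)
    filter_upwards [eventually_ne_atTop 0] with t ht
    simp only [id, add_div, mul_div_cancel_right₀ _ ht]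
  rw [tendsto_order]
  refine ⟨fun a' ha' => ?_, fun a' ha' => ?_⟩
  · obtain ⟨b, ha'b, hba⟩ := exists_between ha'
    obtain ⟨K, hK, hf⟩ := hlower b hba
    filter_upwards [(hlim K b).eventually (lt_mem_nhds ha'b), hf, eventually_gt_atTop 0]
      with t hlt hKf ht
    refine hlt.trans_le (div_le_div_of_nonneg_right ?_ ht.le)
    rw [← log_exp (b * t), ← log_mul hK.ne' (exp_pos _).ne']
    exact log_le_log (by positivity) hKf
  · obtain ⟨C, hf⟩ := hupper
    obtain ⟨K, hK, hfpos⟩ := hlower (a - 1) (by linarith)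
    filter_upwards [(hlim C a).eventually (gt_mem_nhds ha'), hf, hfpos, eventually_gt_atTop 0]
      with t hlt hfC hKf ht
    have hf0 : 0 < f t := lt_of_lt_of_le (by positivity) hKf
    have hC : 0 < C := pos_of_mul_pos_left (hf0.trans_le hfC) (exp_pos _).le
    refine lt_of_le_of_lt (div_le_div_of_nonneg_right ?_ ht.le) hlt
    rw [← log_exp (a * t), ← log_mul hC.ne' (exp_pos _).ne']
    exact log_le_log hf0 hfC

namespace IsHeatSemigroupOf

variable {H : Type*} [NormedAddCommGroup H] [InnerProductSpace ℝ H] [CompleteSpace H]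
  {T : ℝ → H →L[ℝ] H} {ρ : H → Measure ℝ} {E0 : ℝ}

theorem isFiniteMeasure (hT : IsHeatSemigroupOf T ρ E0) (f : H) : IsFiniteMeasure (ρ f) :=
  ⟨lt_top_iff_ne_top.2 (hT.finite f)⟩

theorem ae_le (hT : IsHeatSemigroupOf T ρ E0) (f : H) : ∀ᵐ s ∂ρ f, E0 ≤ s :=
  ae_iff.2 (by simp only [not_le]; exact hT.support_bddBelow f)

theorem integrable_exp (hT : IsHeatSemigroupOf T ρ E0) (f : H) {t : ℝ} (ht : 0 ≤ t) :
    Integrable (fun s => exp (-(t * s))) (ρ f) := by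
  have := hT.isFiniteMeasure f
  refine (integrable_const (exp (-(t * E0)))).mono' (by fun_prop) ?_
  filter_upwards [hT.ae_le f] with s hs
  rw [Real.norm_eq_abs, abs_of_pos (exp_pos _), exp_le_exp]
  nlinarith

theorem norm_sq_eq_measure_univ (hT : IsHeatSemigroupOf T ρ E0) (f : H) :
    ‖f‖ ^ 2 = (ρ f Set.univ).toReal := by
  have h := hT.inner_eq f 0 le_rfl
  rw [hT.map_zero, one_apply_eq_self, real_inner_self_eq_norm_sq] at h
  simpa [measureReal_def] using h

theorem exp_mul_measure_Iio_le_inner (hT : IsHeatSemigroupOf T ρ E0) (f : H) {t E1 : ℝ}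
    (ht : 0 ≤ t) : exp (-(t * E1)) * (ρ f (Set.Iio E1)).toReal ≤ ⟪f, T t f⟫_ℝ := by
  have := hT.isFiniteMeasure f
  rw [hT.inner_eq f t ht, mul_comm, ← smul_eq_mul, ← measureReal_def,
    ← integral_indicator_const _ measurableSet_Iio]
  refine integral_mono_of_nonneg (Eventually.of_forall fun s => ?_) (hT.integrable_exp f ht)
    (Eventually.of_forall fun s => ?_)
  · exact Set.indicator_nonneg (fun _ _ => (exp_pos _).le) s
  · by_cases hs : s ∈ Set.Iio E1
    · rw [Set.indicator_of_mem hs, exp_le_exp]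
      exact neg_le_neg (mul_le_mul_of_nonneg_left (le_of_lt hs) ht)
    · rw [Set.indicator_of_notMem hs]
      exact (exp_pos _).le

theorem inner_le_of_measure_Iio_eq_zero (hT : IsHeatSemigroupOf T ρ E0) (f : H) {t E1 : ℝ}
    (ht : 0 ≤ t) (hf : ρ f (Set.Iio E1) = 0) : ⟪f, T t f⟫_ℝ ≤ exp (-(t * E1)) * ‖f‖ ^ 2 := by
  have := hT.isFiniteMeasure f
  have hle : ∀ᵐ s ∂ρ f, E1 ≤ s := ae_iff.2 (by simp only [not_le]; exact hf)
  rw [hT.inner_eq f t ht, hT.norm_sq_eq_measure_univ f, mul_comm, ← smul_eq_mul,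
    ← measureReal_def, ← integral_const]
  refine integral_mono_of_nonneg (Eventually.of_forall fun s => (exp_pos _).le)
    (integrable_const _) ?_
  filter_upwards [hle] with s hs
  exact exp_le_exp.2 (neg_le_neg (mul_le_mul_of_nonneg_left hs ht))

theorem inner_apply_two_self (hT : IsHeatSemigroupOf T ρ E0) (g : H) :
    ⟪g, T 2 g⟫_ℝ = ‖T 1 g‖ ^ 2 := by
  rw [show (2 : ℝ) = 1 + 1 by norm_num, hT.semigroup 1 1 zero_le_one zero_le_one,
    ContinuousLinearMap.comp_apply, ← hT.symm 1 zero_le_one, real_inner_self_eq_norm_sq]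

theorem exists_exp_mul_norm_sq_lt_inner (hT : IsHeatSemigroupOf T ρ E0) {E1 : ℝ}
    (hE1 : E0 < E1) : ∃ g : H, exp (-(2 * E1)) * ‖g‖ ^ 2 < ⟪g, T 2 g⟫_ℝ := by
  have hnorm : exp (-E1) < ‖T 1‖ := by
    rw [hT.norm_eq 1 zero_le_one, one_mul, exp_lt_exp]
    linarith
  obtain ⟨g, hg, hTg⟩ := (T 1).exists_lt_apply_of_lt_opNorm hnorm
  refine ⟨g, ?_⟩
  have hlt : exp (-E1) * ‖g‖ < ‖T 1 g‖ :=
    lt_of_le_of_lt (mul_le_of_le_one_right (exp_pos _).le hg.le) hTg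
  calc exp (-(2 * E1)) * ‖g‖ ^ 2 = (exp (-E1) * ‖g‖) ^ 2 := by
        rw [mul_pow, ← exp_nat_mul]; ring_nf
    _ < ‖T 1 g‖ ^ 2 := pow_lt_pow_left₀ hlt (by positivity) two_ne_zero
    _ = ⟪g, T 2 g⟫_ℝ := (hT.inner_apply_two_self g).symm

end IsHeatSemigroupOf

namespace IsKernelOf

variable {X : Type*} [MeasurableSpace X] {m : Measure X} {T : ℝ → Lp ℝ 2 m →L[ℝ] Lp ℝ 2 m}
  {p : ℝ → X → X → ℝ}

def toLp (hp : IsKernelOf m T p) {t : ℝ} (ht : 0 < t) (x : X) : Lp ℝ 2 m :=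
  (hp.memL2 t ht x).toLp (p t x)

theorem coeFn_toLp (hp : IsKernelOf m T p) {t : ℝ} (ht : 0 < t) (x : X) :
    ⇑(hp.toLp ht x) =ᵐ[m] p t x :=
  (hp.memL2 t ht x).coeFn_toLp

theorem toLp_nonneg (hp : IsKernelOf m T p) {t : ℝ} (ht : 0 < t) (x : X) :
    0 ≤ hp.toLp ht x :=
  (Lp.coeFn_nonneg _).1 <| (hp.coeFn_toLp ht x).mono fun z hz => hz ▸ (hp.pos t ht x z).le

theorem nonneg_apply (hp : IsKernelOf m T p) {t : ℝ} (ht : 0 < t) {f : Lp ℝ 2 m}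
    (hf : 0 ≤ f) : 0 ≤ T t f := by
  rw [← Lp.coeFn_nonneg] at hf ⊢
  filter_upwards [hp.represents t ht f] with z hz
  rw [hz]
  exact integral_nonneg_of_ae (hf.mono fun w hw => mul_nonneg (hp.pos t ht z w).le hw)

theorem inner_apply_nonneg (hp : IsKernelOf m T p) {t : ℝ} (ht : 0 < t) (f g : Lp ℝ 2 m)
    (hf : 0 ≤ f) (hg : 0 ≤ g) : 0 ≤ ⟪f, T t g⟫_ℝ :=
  L2.real_inner_nonneg hf (hp.nonneg_apply ht hg)

theorem apply_toLp_ae (hp : IsKernelOf m T p) {t s : ℝ} (ht : 0 < t) (hs : 0 < s) (y : X) :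
    ⇑(T t (hp.toLp hs y)) =ᵐ[m] fun z => p (t + s) z y := by
  filter_upwards [hp.represents t ht (hp.toLp hs y)] with z hz
  rw [hz, hp.chapman t s ht hs z y]
  refine integral_congr_ae ?_
  filter_upwards [hp.coeFn_toLp hs y] with w hw
  rw [hw, hp.symm s hs y w]

theorem inner_toLp_apply_toLp (hp : IsKernelOf m T p) {s t s' : ℝ} (hs : 0 < s) (ht : 0 < t)
    (hs' : 0 < s') (x y : X) :
    ⟪hp.toLp hs x, T t (hp.toLp hs' y)⟫_ℝ = p (s + (t + s')) x y := by
  rw [L2.real_inner_eq_integral, hp.chapman s (t + s') hs (by positivity)]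
  refine integral_congr_ae ?_
  filter_upwards [hp.coeFn_toLp hs x, hp.apply_toLp_ae ht hs' y] with z hx hy
  rw [hx, hy]

variable {ρ : Lp ℝ 2 m → Measure ℝ} {E0 : ℝ}

theorem eventually_le_exp (hT : IsHeatSemigroupOf T ρ E0) (hp : IsKernelOf m T p) (x y : X) :
    ∃ C, ∀ᶠ t in atTop, p t x y ≤ C * exp (-E0 * t) := by
  set fx := hp.toLp one_pos x
  set fy := hp.toLp one_pos y
  refine ⟨‖fx‖ * ‖fy‖ * exp (2 * E0), ?_⟩
  filter_upwards [eventually_gt_atTop 2] with t ht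
  have hp_eq := hp.inner_toLp_apply_toLp one_pos (t := t - 2) (by linarith) one_pos x y
  rw [show 1 + (t - 2 + 1) = t by ring] at hp_eq
  calc p t x y ≤ ‖fx‖ * ‖T (t - 2) fy‖ := hp_eq ▸ real_inner_le_norm _ _
    _ ≤ ‖fx‖ * (exp (-((t - 2) * E0)) * ‖fy‖) := by
        gcongr
        exact hT.norm_eq (t - 2) (by linarith) ▸ (T (t - 2)).le_opNorm fy
    _ = ‖fx‖ * ‖fy‖ * exp (2 * E0) * exp (-E0 * t) := by
        rw [mul_assoc _ _ (exp (-E0 * t)), ← exp_add]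
        ring_nf

theorem exists_nonneg_exp_mul_norm_sq_lt_inner (hT : IsHeatSemigroupOf T ρ E0)
    (hp : IsKernelOf m T p) {E1 : ℝ} (hE1 : E0 < E1) :
    ∃ h : Lp ℝ 2 m, 0 ≤ h ∧ exp (-(2 * E1)) * ‖h‖ ^ 2 < ⟪h, T 2 h⟫_ℝ := by
  obtain ⟨g, hg⟩ := hT.exists_exp_mul_norm_sq_lt_inner hE1
  refine ⟨|g|, abs_nonneg g, ?_⟩
  rw [norm_abs_eq_norm]
  exact hg.trans_le (inner_apply_self_le_abs (hp.inner_apply_nonneg two_pos) g)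

/-- The truncations `h ⊓ c • Ψ` tend to `h` as `c → ∞`, and the strict inequality is an open
condition. -/
theorem exists_le_smul_exp_mul_norm_sq_lt_inner (hT : IsHeatSemigroupOf T ρ E0)
    (hp : IsKernelOf m T p) {E1 : ℝ} (hE1 : E0 < E1) {Ψ : Lp ℝ 2 m} (hΨ : ∀ᵐ z ∂m, 0 < Ψ z) :
    ∃ c : ℝ, 0 < c ∧ ∃ f : Lp ℝ 2 m,
      0 ≤ f ∧ f ≤ c • Ψ ∧ exp (-(2 * E1)) * ‖f‖ ^ 2 < ⟪f, T 2 f⟫_ℝ := by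
  obtain ⟨h, hh, hlt⟩ := hp.exists_nonneg_exp_mul_norm_sq_lt_inner hT hE1
  have hΨ0 : 0 ≤ Ψ := (Lp.coeFn_nonneg Ψ).1 (hΨ.mono fun z hz => hz.le)
  have hclosed : IsClosed {f : Lp ℝ 2 m | ⟪f, T 2 f⟫_ℝ ≤ exp (-(2 * E1)) * ‖f‖ ^ 2} :=
    isClosed_le (by fun_prop) (by fun_prop)
  have hfreq : ∃ᶠ c in atTop, ¬ ⟪h ⊓ c • Ψ, T 2 (h ⊓ c • Ψ)⟫_ℝ
      ≤ exp (-(2 * E1)) * ‖h ⊓ c • Ψ‖ ^ 2 :=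
    not_eventually.1 fun hev =>
      hlt.not_ge (hclosed.mem_of_tendsto (L2.tendsto_inf_smul_atTop h Ψ hΨ) hev)
  obtain ⟨c, hc, hcpos⟩ := (hfreq.and_eventually (eventually_gt_atTop 0)).exists
  exact ⟨c, hcpos, h ⊓ c • Ψ, le_inf hh (smul_nonneg hcpos.le hΨ0), inf_le_right, not_le.1 hc⟩

theorem inner_apply_le_of_le_smul_inf (hp : IsKernelOf m T p) {t c : ℝ} (ht : 0 < t)
    (hc : 0 ≤ c) {f : Lp ℝ 2 m} (hf : 0 ≤ f) (x y : X)
    (hfc : f ≤ c • (hp.toLp two_pos x ⊓ hp.toLp two_pos y)) :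
    ⟪f, T t f⟫_ℝ ≤ c ^ 2 * p (2 + (t + 2)) x y := by
  set fx := hp.toLp two_pos x
  set fy := hp.toLp two_pos y
  calc ⟪f, T t f⟫_ℝ ≤ ⟪c • fx, T t (c • fy)⟫_ℝ :=
        inner_apply_mono (hp.inner_apply_nonneg ht) hf (smul_nonneg hc (hp.toLp_nonneg _ y))
          (hfc.trans (smul_le_smul_of_nonneg_left inf_le_left hc))
          (hfc.trans (smul_le_smul_of_nonneg_left inf_le_right hc))
    _ = c ^ 2 * p (2 + (t + 2)) x y := by
        rw [map_smul, real_inner_smul_left, real_inner_smul_right,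
          hp.inner_toLp_apply_toLp two_pos ht two_pos]
        ring

theorem eventually_exp_le (hT : IsHeatSemigroupOf T ρ E0) (hp : IsKernelOf m T p) (x y : X)
    {E1 : ℝ} (hE1 : E0 < E1) : ∃ K > 0, ∀ᶠ t in atTop, K * exp (-E1 * t) ≤ p t x y := by
  have hΨ : ∀ᵐ z ∂m, 0 < (hp.toLp two_pos x ⊓ hp.toLp two_pos y) z := by
    filter_upwards [Lp.coeFn_inf (hp.toLp two_pos x) (hp.toLp two_pos y),
      hp.coeFn_toLp two_pos x, hp.coeFn_toLp two_pos y] with z hz hx hy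
    rw [hz, Pi.inf_apply, hx, hy]
    exact lt_min (hp.pos 2 two_pos x z) (hp.pos 2 two_pos y z)
  obtain ⟨c, hc, f, hf0, hfc, hf⟩ := hp.exists_le_smul_exp_mul_norm_sq_lt_inner hT hE1 hΨ
  have := hT.isFiniteMeasure f
  set M := (ρ f (Set.Iio E1)).toReal
  have hM : 0 < M := ENNReal.toReal_pos
    (fun h0 => hf.not_ge (hT.inner_le_of_measure_Iio_eq_zero f two_pos.le h0)) (measure_ne_top _ _)
  refine ⟨M * exp (4 * E1) / c ^ 2, by positivity, ?_⟩
  filter_upwards [eventually_gt_atTop 4] with t ht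
  have hupper := hp.inner_apply_le_of_le_smul_inf (t := t - 4) (by linarith) hc.le hf0 x y hfc
  have hlower := hT.exp_mul_measure_Iio_le_inner f (t := t - 4) (E1 := E1) (by linarith)
  rw [show 2 + (t - 4 + 2) = t by ring] at hupper
  rw [div_mul_eq_mul_div, div_le_iff₀ (by positivity)]
  calc M * exp (4 * E1) * exp (-E1 * t) = exp (-((t - 4) * E1)) * M := by
        rw [mul_assoc, ← exp_add, mul_comm]; ring_nf
    _ ≤ p t x y * c ^ 2 := by linarith

end IsKernelOf

theorem statement10_general {X : Type*} [MeasurableSpace X] (m : Measure X)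
    (T : ℝ → Lp ℝ 2 m →L[ℝ] Lp ℝ 2 m) (ρ : Lp ℝ 2 m → Measure ℝ) (E0 : ℝ)
    (hT : IsHeatSemigroupOf T ρ E0)
    (p : ℝ → X → X → ℝ) (hp : IsKernelOf m T p) :
    ∀ x y : X, Tendsto (fun t : ℝ => Real.log (p t x y) / t) atTop (𝓝 (-E0)) := by
  intro x y
  refine tendsto_log_div_of_exp_bounds (fun b hb => ?_) (hp.eventually_le_exp hT x y)
  simpa using hp.eventually_exp_le hT x y (E1 := -b) (by linarith)

/-- Let `L` be a selfadjoint operator in `L²(X, m)`, bounded below, with `E0`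
the infimum of the spectrum of `L`, and assume that the semigroup `(e^{-tL})_{t≥0}` has a
kernel `p` satisfying (K1), (K2), (K3). Then for all `x, y ∈ X`,
`(log p_t(x, y))/t → -E0` as `t → ∞`. -/
theorem statement10 {X : Type*} [MeasurableSpace X] (m : Measure X) [SigmaFinite m]
    (T : ℝ → Lp ℝ 2 m →L[ℝ] Lp ℝ 2 m) (ρ : Lp ℝ 2 m → Measure ℝ) (E0 : ℝ)
    (hT : IsHeatSemigroupOf T ρ E0)
    (p : ℝ → X → X → ℝ) (hp : IsKernelOf m T p) :
    ∀ x y : X, Tendsto (fun t : ℝ => Real.log (p t x y) / t) atTop (𝓝 (-E0)) :=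
  statement10_general m T ρ E0 hT p hp
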